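/- Let k be a field of characteristic not 2 or 3 and let (A,−) be an (m₁,m₂)-product algebra with S = Skew(A,−), Albert form Q, and ♮-map on S. Then there exists a unique k-algebra homomorphism θ: C⁺(S,Q) → End_k(A) from the even Clifford algebra of the quadratic space (S,Q) such that θ(st) = −L_s ∘ L_{t^♮} for all s,t ∈ S (where st denotes the product of s and t inside the Clifford algebra). -/

import Mathlib

open scoped TensorProduct

noncomputable section

universe u

/-- A unital, not necessarily associative, algebra with involution over a commutative ring. -/
structure AlgebraWithInvolution (R : Type u) [CommRing R] : Type (u + 1) where
  carrier : Type u
  [isNonAssocRing : NonAssocRing carrier]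
  [isModule : Module R carrier]
  [isSMulCommClass : SMulCommClass R carrier carrier]
  [isScalarTower : IsScalarTower R carrier carrier]
  invol : carrier →ₗ[R] carrier
  invol_one : invol 1 = 1
  invol_mul : ∀ x y : carrier, invol (x * y) = invol y * invol x
  invol_invol : ∀ x : carrier, invol (invol x) = x

namespace AlgebraWithInvolution

attribute [instance] isNonAssocRing isModule isSMulCommClass isScalarTower

instance {R : Type u} [CommRing R] : CoeSort (AlgebraWithInvolution R) (Type u) :=
  ⟨carrier⟩

variable {R : Type u} [CommRing R]

/-- The operator `V_{x,y} z = (x ȳ) z + (z ȳ) x − (z x̄) y` of a (candidate) structurable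
algebra. -/
def Vop (A : AlgebraWithInvolution R) (x y z : A) : A :=
  (x * A.invol y) * z + (z * A.invol y) * x - (z * A.invol x) * y

/-- `(A,−)` is a structurable algebra:
`[V_{x,y}, V_{z,w}] = V_{V_{x,y} z, w} − V_{z, V_{y,x} w}`. -/
def IsStructurable (A : AlgebraWithInvolution R) : Prop :=
  ∀ x y z w v : A,
    A.Vop x y (A.Vop z w v) - A.Vop z w (A.Vop x y v) =
      A.Vop (A.Vop x y z) w v - A.Vop z (A.Vop y x w) v

/-- An element `x` is conjugate-invertible if `V_{x,y} = id` for some `y`. -/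
def ConjInvertible (A : AlgebraWithInvolution R) (x : A) : Prop :=
  ∃ y : A, ∀ z : A, A.Vop x y z = z

/-- A structurable division algebra: every nonzero element is conjugate-invertible. -/
def IsStructurableDivisionAlgebra (A : AlgebraWithInvolution R) : Prop :=
  ∀ x : A, x ≠ 0 → A.ConjInvertible x

/-- The submodule of skew elements of an algebra with involution. -/
def skew (A : AlgebraWithInvolution R) : Submodule R A.carrier where
  carrier := {a | A.invol a = -a}
  add_mem' := by
    intro a b ha hb
    simp only [Set.mem_setOf_eq, map_add] at *
    rw [ha, hb, neg_add]
  zero_mem' := by simp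
  smul_mem' := by
    intro c a ha
    simp only [Set.mem_setOf_eq, map_smul] at *
    rw [ha, smul_neg]

/-- `ψ(x,y) = x ȳ − y x̄`. -/
def psi (A : AlgebraWithInvolution R) (x y : A) : A :=
  x * A.invol y - y * A.invol x

/-- Isomorphisms of algebras with involution. -/
structure Iso (A B : AlgebraWithInvolution R) where
  toLinearEquiv : A.carrier ≃ₗ[R] B.carrier
  map_mul : ∀ x y : A, toLinearEquiv (x * y) = toLinearEquiv x * toLinearEquiv y
  map_one : toLinearEquiv 1 = 1
  map_invol : ∀ x : A, toLinearEquiv (A.invol x) = B.invol (toLinearEquiv x)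

/-- Isotopies of (structurable) algebras with involution: pairs `(α, α̂)` of linear
bijections with `α ∘ V_{x,y} ∘ α⁻¹ = V_{α x, α̂ y}`. -/
structure Isotopy (A B : AlgebraWithInvolution R) where
  toLinearEquiv : A.carrier ≃ₗ[R] B.carrier
  hat : A.carrier ≃ₗ[R] B.carrier
  map_Vop : ∀ x y z : A,
    toLinearEquiv (A.Vop x y z) = B.Vop (toLinearEquiv x) (hat y) (toLinearEquiv z)

/-- Two algebras with involution are isotopic if there is an isotopy between them. -/
def IsIsotopic (A B : AlgebraWithInvolution R) : Prop :=
  Nonempty (A.Isotopy B)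

/-- The tensor product of two algebras with involution. -/
def tensor (A B : AlgebraWithInvolution R) : AlgebraWithInvolution R where
  carrier := A.carrier ⊗[R] B.carrier
  invol := TensorProduct.map A.invol B.invol
  invol_one := by
    simp [Algebra.TensorProduct.one_def, A.invol_one, B.invol_one]
  invol_mul := by
    intro x y
    induction x with
    | zero => simp
    | tmul a b =>
      induction y with
      | zero => simp
      | tmul c d =>
        simp [Algebra.TensorProduct.tmul_mul_tmul, A.invol_mul, B.invol_mul]
      | add u v hu hv =>
        simp only [mul_add, map_add, hu, hv, add_mul]
    | add u v hu hv =>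
      simp only [add_mul, map_add, hu, hv, mul_add]
  invol_invol := by
    intro x
    induction x with
    | zero => simp
    | tmul a b => simp [A.invol_invol, B.invol_invol]
    | add u v hu hv => simp [hu, hv]

/-- Base change of an algebra with involution along `R → S`. -/
def baseChange (A : AlgebraWithInvolution R) (S : Type u) [CommRing S] [Algebra R S] :
    AlgebraWithInvolution S where
  carrier := S ⊗[R] A.carrier
  invol := LinearMap.baseChange S A.invol
  invol_one := by
    simp [Algebra.TensorProduct.one_def, A.invol_one]
  invol_mul := by
    intro x y
    induction x with
    | zero => simp
    | tmul s a =>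
      induction y with
      | zero => simp
      | tmul t b =>
        simp only [Algebra.TensorProduct.tmul_mul_tmul, LinearMap.baseChange_tmul,
          A.invol_mul, mul_comm s t]
      | add u v hu hv =>
        simp only [mul_add, map_add, hu, hv, add_mul]
    | add u v hu hv =>
      simp only [add_mul, map_add, hu, hv, mul_add]
  invol_invol := by
    intro x
    induction x with
    | zero => simp
    | tmul s a => simp [A.invol_invol]
    | add u v hu hv => simp [hu, hv]

end AlgebraWithInvolution

/-- A composition algebra over a field `F`: a unital (possibly non-associative) algebra with a
nondegenerate multiplicative quadratic form, together with its standard involution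
`x̄ = b(x,1)·1 − x` (where `b` is the polar form of the norm). -/
structure CompositionAlgebra (F : Type u) [Field F] : Type (u + 1) where
  carrier : Type u
  [isNonAssocRing : NonAssocRing carrier]
  [isModule : Module F carrier]
  [isSMulCommClass : SMulCommClass F carrier carrier]
  [isScalarTower : IsScalarTower F carrier carrier]
  [isFinite : FiniteDimensional F carrier]
  norm : QuadraticForm F carrier
  norm_one : norm 1 = 1
  norm_mul : ∀ x y : carrier, norm (x * y) = norm x * norm y
  nondegenerate : ∀ x : carrier, (∀ y : carrier, norm (x + y) - norm x - norm y = 0) → x = 0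
  conj : carrier →ₗ[F] carrier
  conj_def : ∀ x : carrier, conj x = (norm (x + 1) - norm x - norm 1) • (1 : carrier) - x
  conj_one : conj 1 = 1
  conj_mul : ∀ x y : carrier, conj (x * y) = conj y * conj x
  conj_conj : ∀ x : carrier, conj (conj x) = x

namespace CompositionAlgebra

attribute [instance] isNonAssocRing isModule isSMulCommClass isScalarTower isFinite

variable {F : Type u} [Field F]

/-- A composition algebra, viewed as an algebra with its standard involution. -/
def toAWI (C : CompositionAlgebra F) : AlgebraWithInvolution F where
  carrier := C.carrier
  invol := C.conj
  invol_one := C.conj_one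
  invol_mul := C.conj_mul
  invol_invol := C.conj_conj

end CompositionAlgebra

/-- A splitting datum witnessing that `(A,−)` is an `(m₁, m₂)`-product algebra: a field
extension `K/k` over which `(A,−)` becomes isomorphic, as an algebra with involution, to the
tensor product of two composition algebras (with their standard involutions) of dimensions
`m₁` and `m₂`. -/
structure ProductAlgebraSplitting {k : Type u} [Field k]
    (A : AlgebraWithInvolution k) (m₁ m₂ : ℕ) : Type (u + 1) where
  K : Type u
  [fieldK : Field K]
  [algK : Algebra k K]
  C₁ : CompositionAlgebra K
  C₂ : CompositionAlgebra K
  finrank₁ : Module.finrank K C₁.carrier = m₁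
  finrank₂ : Module.finrank K C₂.carrier = m₂
  iso : (A.baseChange K).Iso (C₁.toAWI.tensor C₂.toAWI)

attribute [instance] ProductAlgebraSplitting.fieldK ProductAlgebraSplitting.algK

/-- `(A,−)` is an `(m₁, m₂)`-product algebra. -/
def IsProductAlgebra {k : Type u} [Field k] (A : AlgebraWithInvolution k) (m₁ m₂ : ℕ) : Prop :=
  Nonempty (ProductAlgebraSplitting A m₁ m₂)

/-- An Albert form of an `(m₁,m₂)`-product algebra `(A,−)`: a quadratic form `Q` on the space
of skew elements, together with the `♮`-map, satisfying `L_s ∘ L_{s♮} = −Q(s)·id` and such that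
`Q(s) ≠ 0` iff left multiplication by `s` is invertible. -/
structure AlbertForm {k : Type u} [Field k] (A : AlgebraWithInvolution k) where
  Q : QuadraticForm k A.skew
  natMap : A.skew →ₗ[k] A.skew
  mul_natMap : ∀ (s : A.skew) (a : A.carrier),
    (s : A.carrier) * ((natMap s : A.carrier) * a) = -(Q s) • a
  nonzero_iff : ∀ s : A.skew,
    Q s ≠ 0 ↔ Function.Bijective fun a : A.carrier => (s : A.carrier) * a

end

/-!
The even Clifford algebra is universal for bilinear maps `f` with `f(s,s) = Q(s)` and
`f(r,s) f(s,t) = Q(s) f(r,t)`. For `f(s,t) = −L_s L_{t♮}` the first condition is the axiom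
`L_s L_{s♮} = −Q(s)`, and the second reduces to the reversed identity `L_{s♮} L_s = −Q(s)`.

When `Q(s) ≠ 0`, `L_s` is bijective, so the reversed identity follows from the axiom. If `Q`
is not identically zero, every `s` lies on a line `s + x t` with at least two anisotropic points,
and the identity on that line is polynomial of degree one in `x` once the `x²`-term is removed,
so it holds at `s`. If `Q = 0`, the polarised axiom `L_s L_{t♮} + L_t L_{s♮} = 0` survives base
change to a splitting field, where the skew elements are spanned by tensors `x ⊗ 1`, `1 ⊗ y`
with `x`, `y` anisotropic skew elements of the composition algebras. Left multiplication by
such a tensor is injective, which forces `♮ = 0`.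
-/

open QuadraticMap

theorem quadratic_coeff_eq_zero_of_three_roots {k : Type*} [Field k] {a b c x y z : k}
    (hx : a + b * x + c * x ^ 2 = 0) (hy : a + b * y + c * y ^ 2 = 0)
    (hz : a + b * z + c * z ^ 2 = 0) (hxy : x ≠ y) (hxz : x ≠ z) (hyz : y ≠ z) : c = 0 := by
  have hxy' : b + c * (x + y) = 0 :=
    (mul_eq_zero.1 (by linear_combination hx - hy : (x - y) * (b + c * (x + y)) = 0)).resolve_left
      (sub_ne_zero.2 hxy)
  have hxz' : b + c * (x + z) = 0 :=
    (mul_eq_zero.1 (by linear_combination hx - hz : (x - z) * (b + c * (x + z)) = 0)).resolve_left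
      (sub_ne_zero.2 hxz)
  exact (mul_eq_zero.1 (by linear_combination hxy' - hxz' : c * (y - z) = 0)).resolve_right
    (sub_ne_zero.2 hyz)

theorem exists_two_nonroots_of_quadratic {k : Type*} [Field k] (h2 : (2 : k) ≠ 0)
    (h3 : (3 : k) ≠ 0) {a b c : k} (hc : c ≠ 0) :
    ∃ x y : k, x ≠ y ∧ a + b * x + c * x ^ 2 ≠ 0 ∧ a + b * y + c * y ^ 2 ≠ 0 := by
  by_contra! H
  have h01 : (0 : k) ≠ 1 := zero_ne_one
  have h12 : (1 : k) ≠ 2 := fun h => one_ne_zero (by linear_combination -h : (1 : k) = 0)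
  have h13 : (1 : k) ≠ 3 := fun h => h2 (by linear_combination -h)
  have h23 : (2 : k) ≠ 3 := fun h => one_ne_zero (by linear_combination -h : (1 : k) = 0)
  have roots := @quadratic_coeff_eq_zero_of_three_roots k _ a b c
  by_cases hr0 : a + b * 0 + c * 0 ^ 2 = 0
  · by_cases hr1 : a + b * 1 + c * 1 ^ 2 = 0
    · by_cases hr2 : a + b * 2 + c * 2 ^ 2 = 0
      · exact hc (roots hr0 hr1 hr2 h01 h2.symm h12)
      · exact hc (roots hr0 hr1 (H 2 3 h23 hr2) h01 h3.symm h13)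
    · exact hc (roots hr0 (H 1 2 h12 hr1) (H 1 3 h13 hr1) h2.symm h3.symm h23)
  · exact hc (roots (H 0 1 h01 hr0) (H 0 2 h2.symm hr0) (H 0 3 h3.symm hr0) h12 h13 h23)

theorem QuadraticMap.le_span_setOf_ne_zero {K V : Type*} [Field K] [AddCommGroup V]
    [Module K V] (h2 : (2 : K) ≠ 0) (Q : QuadraticForm K V) {W : Submodule K V} {w : V}
    (hw : w ∈ W) (hQw : Q w ≠ 0) : W ≤ Submodule.span K {x | x ∈ W ∧ Q x ≠ 0} := by
  have hspan {x : V} (hx : x ∈ W) (hQx : Q x ≠ 0) :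
      x ∈ Submodule.span K {x | x ∈ W ∧ Q x ≠ 0} :=
    Submodule.subset_span ⟨hx, hQx⟩
  intro c hc
  obtain hQc | hQc := ne_or_eq (Q c) 0
  · exact hspan hc hQc
  have hline (a : K) : Q (c + a • w) = a * (polar Q c w + a * Q w) := by
    rw [QuadraticMap.map_add Q, polar_smul_right, QuadraticMap.map_smul, hQc, smul_eq_mul,
      smul_eq_mul]
    ring
  obtain ⟨a, ha, hQa⟩ : ∃ a : K, a ≠ 0 ∧ Q (c + a • w) ≠ 0 := by
    by_cases h1 : polar Q c w + Q w = 0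
    · refine ⟨2, h2, ?_⟩
      rw [hline, show polar Q c w + 2 * Q w = Q w by linear_combination h1]
      exact mul_ne_zero h2 hQw
    · exact ⟨1, one_ne_zero, by rwa [hline, one_mul, one_mul]⟩
  simpa using Submodule.sub_mem _ (hspan (W.add_mem hc (W.smul_mem a hw)) hQa)
    (Submodule.smul_mem _ a (hspan hw hQw))

theorem LinearMap.baseChange_mul_mul_add_mul_mul_eq_zero {k : Type*} [Field k] (K : Type*)
    [Field K] [Algebra k K] {M B : Type*} [AddCommGroup M] [Module k M] [NonAssocRing B]
    [Module k B] [SMulCommClass k B B] [IsScalarTower k B B] (f g : M →ₗ[k] B)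
    (h : ∀ x y b, f x * (g y * b) + f y * (g x * b) = 0) (σ τ : K ⊗[k] M) (b : K ⊗[k] B) :
    f.baseChange K σ * (g.baseChange K τ * b) + f.baseChange K τ * (g.baseChange K σ * b) =
      0 := by
  induction σ with
  | zero => simp
  | add σ₁ σ₂ h₁ h₂ =>
    simp only [map_add, add_mul, mul_add]
    rw [add_add_add_comm, h₁, h₂, add_zero]
  | tmul c x =>
    induction τ with
    | zero => simp
    | add τ₁ τ₂ h₁ h₂ =>
      simp only [map_add, add_mul, mul_add]
      rw [add_add_add_comm, h₁, h₂, add_zero]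
    | tmul d y =>
      induction b with
      | zero => simp
      | add b₁ b₂ h₁ h₂ => simp only [mul_add]; rw [add_add_add_comm, h₁, h₂, add_zero]
      | tmul e a =>
        simp only [LinearMap.baseChange_tmul, Algebra.TensorProduct.tmul_mul_tmul]
        rw [mul_left_comm d c e, ← TensorProduct.tmul_add, h x y a, TensorProduct.tmul_zero]

namespace AlgebraWithInvolution

theorem Iso.map_skew {k : Type u} [CommRing k]
    {A B : AlgebraWithInvolution k} (e : A.Iso B) :
    A.skew.map e.toLinearEquiv.toLinearMap = B.skew := by
  ext z
  rw [Submodule.mem_map_equiv]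
  change A.invol _ = _ ↔ B.invol z = -z
  rw [← e.toLinearEquiv.injective.eq_iff, e.map_invol, LinearEquiv.apply_symm_apply, map_neg,
    LinearEquiv.apply_symm_apply]

variable {k : Type u} [Field k] (A : AlgebraWithInvolution k) (K : Type u) [Field K]
  [Algebra k K]

theorem range_baseChange_skew_subtype (h2 : (2 : K) ≠ 0) :
    LinearMap.range (A.skew.subtype.baseChange K) = (A.baseChange K).skew := by
  apply le_antisymm
  · rintro _ ⟨σ, rfl⟩
    induction σ with
    | zero => rw [map_zero]; exact zero_mem _
    | add σ τ hσ hτ => rw [map_add]; exact add_mem hσ hτ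
    | tmul c s =>
      change LinearMap.baseChange K A.invol _ = _
      rw [LinearMap.baseChange_tmul, LinearMap.baseChange_tmul, Submodule.subtype_apply, s.2,
        TensorProduct.tmul_neg]
      rfl
  · have hsub (w : K ⊗[k] A.carrier) :
        w - A.invol.baseChange K w ∈ LinearMap.range (A.skew.subtype.baseChange K) := by
      induction w with
      | zero => simp
      | add u v hu hv => rw [map_add, add_sub_add_comm]; exact add_mem hu hv
      | tmul c a =>
        have ha : a - A.invol a ∈ A.skew := by
          change A.invol _ = _
          rw [map_sub, A.invol_invol, neg_sub]
        refine ⟨c ⊗ₜ[k] ⟨a - A.invol a, ha⟩, ?_⟩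
        rw [LinearMap.baseChange_tmul, LinearMap.baseChange_tmul, Submodule.subtype_apply,
          TensorProduct.tmul_sub]
    intro (z : K ⊗[k] A.carrier) hz
    have h := hsub z
    rw [show A.invol.baseChange K z = -z from hz, sub_neg_eq_add, ← two_smul K z] at h
    simpa [smul_smul, inv_mul_cancel₀ h2] using Submodule.smul_mem _ (2⁻¹ : K) h

end AlgebraWithInvolution

namespace CompositionAlgebra

variable {F : Type u} [Field F] (C : CompositionAlgebra F)

theorem polar_mul_mul_right (x z y : C.carrier) :
    polar C.norm (x * y) (z * y) = polar C.norm x z * C.norm y := by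
  have h := C.norm_mul (x + z) y
  rw [add_mul] at h
  simp only [polar, C.norm_mul, h]
  ring

theorem polar_mul_mul_left (x y w : C.carrier) :
    polar C.norm (x * y) (x * w) = C.norm x * polar C.norm y w := by
  have h := C.norm_mul x (y + w)
  rw [mul_add] at h
  simp only [polar, C.norm_mul, h]
  ring

theorem polar_mul_mul_add_polar_mul_mul (x y z w : C.carrier) :
    polar C.norm (x * y) (z * w) + polar C.norm (x * w) (z * y) =
      polar C.norm x z * polar C.norm y w := by
  have h := C.polar_mul_mul_right x z (y + w)
  have hy := C.polar_mul_mul_right x z y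
  have hw := C.polar_mul_mul_right x z w
  simp only [mul_add, polar_add_left, polar_add_right] at h
  simp only [polar] at *
  linear_combination h - hy - hw

theorem conj_eq_polar_smul_one_sub (x : C.carrier) :
    C.conj x = polar C.norm x 1 • (1 : C.carrier) - x := by
  rw [C.conj_def x, polar, C.norm_one]

theorem polar_mul_left_eq_polar_conj_mul (x y z : C.carrier) :
    polar C.norm (x * y) z = polar C.norm y (C.conj x * z) := by
  have h := C.polar_mul_mul_add_polar_mul_mul 1 y x z
  rw [one_mul, one_mul, polar_comm _ 1 x] at h
  rw [C.conj_eq_polar_smul_one_sub, sub_mul, smul_mul_assoc, one_mul, polar_sub_right,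
    polar_smul_right, smul_eq_mul, polar_comm _ (x * y)]
  linear_combination h

theorem conj_mul_mul (x y : C.carrier) : C.conj x * (x * y) = C.norm x • y := by
  rw [← sub_eq_zero]
  refine C.nondegenerate _ fun z => ?_
  rw [← polar, polar_sub_left, polar_smul_left,
    C.polar_mul_left_eq_polar_conj_mul, C.conj_conj, C.polar_mul_mul_left, smul_eq_mul,
    sub_self]

theorem mul_left_injective {x : C.carrier} (hx : C.norm x ≠ 0) :
    Function.Injective (x * ·) := by
  intro y₁ y₂ h
  have h' := congrArg (C.conj x * ·) h
  simp only [conj_mul_mul] at h'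
  exact smul_right_injective C.carrier hx h'

def skew : Submodule F C.carrier := C.toAWI.skew

theorem mem_skew_iff {x : C.carrier} : x ∈ C.skew ↔ C.conj x = -x := Iff.rfl

theorem polar_one_eq_zero_of_mem_skew {c : C.carrier} (hc : c ∈ C.skew) :
    polar C.norm c 1 = 0 := by
  have h1 : (1 : C.carrier) ≠ 0 := fun h => by simpa [h] using C.norm_one
  have h := C.conj_eq_polar_smul_one_sub c
  rw [C.mem_skew_iff.1 hc, eq_sub_iff_add_eq, neg_add_cancel, eq_comm, smul_eq_zero] at h
  exact h.resolve_right h1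

theorem exists_mem_skew_add_smul_one (h2 : (2 : F) ≠ 0) (x : C.carrier) :
    ∃ x₀ ∈ C.skew, ∃ a : F, x = x₀ + a • 1 := by
  set a := (2 : F)⁻¹ * polar C.norm x 1
  refine ⟨x - a • 1, ?_, a, by abel⟩
  have ha : polar C.norm x 1 = a + a := by
    simp only [a]
    field_simp
    ring
  rw [mem_skew_iff, map_sub, map_smul, C.conj_one, C.conj_eq_polar_smul_one_sub, ha]
  module

theorem eq_zero_of_forall_mem_skew_norm_eq_zero (h2 : (2 : F) ≠ 0)
    (hiso : ∀ x ∈ C.skew, C.norm x = 0) {c : C.carrier} (hc : c ∈ C.skew) :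
    c = 0 := by
  refine C.nondegenerate c fun z => ?_
  change polar C.norm c z = 0
  obtain ⟨z₀, hz₀, a, rfl⟩ := C.exists_mem_skew_add_smul_one h2 z
  have hcz₀ : polar C.norm c z₀ = 0 := by
    rw [polar, hiso _ (add_mem hc hz₀), hiso c hc, hiso z₀ hz₀, sub_zero, sub_zero]
  rw [polar_add_right, polar_smul_right, hcz₀, C.polar_one_eq_zero_of_mem_skew hc, smul_zero,
    add_zero]

theorem skew_le_span_norm_ne_zero (h2 : (2 : F) ≠ 0) :
    C.skew ≤ Submodule.span F {x | x ∈ C.skew ∧ C.norm x ≠ 0} := by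
  by_cases h : ∃ w ∈ C.skew, C.norm w ≠ 0
  · obtain ⟨w, hw, hNw⟩ := h
    exact QuadraticMap.le_span_setOf_ne_zero h2 C.norm hw hNw
  · push Not at h
    intro c hc
    rw [C.eq_zero_of_forall_mem_skew_norm_eq_zero h2 h hc]
    exact zero_mem _

variable {K : Type u} [Field K] (C₁ C₂ : CompositionAlgebra K)

def anisotropicSkewGenerators : Set (C₁.carrier ⊗[K] C₂.carrier) :=
  (· ⊗ₜ[K] (1 : C₂.carrier)) '' {x | x ∈ C₁.skew ∧ C₁.norm x ≠ 0} ∪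
    ((1 : C₁.carrier) ⊗ₜ[K] ·) '' {y | y ∈ C₂.skew ∧ C₂.norm y ≠ 0}

theorem mem_skew_of_mem_anisotropicSkewGenerators {g : C₁.carrier ⊗[K] C₂.carrier}
    (hg : g ∈ anisotropicSkewGenerators C₁ C₂) :
    g ∈ (C₁.toAWI.tensor C₂.toAWI).skew := by
  rcases hg with (⟨x, ⟨hx, -⟩, rfl⟩ | ⟨y, ⟨hy, -⟩, rfl⟩)
  · change TensorProduct.map C₁.conj C₂.conj _ = _
    rw [TensorProduct.map_tmul, C₁.mem_skew_iff.1 hx, C₂.conj_one, TensorProduct.neg_tmul]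
    rfl
  · change TensorProduct.map C₁.conj C₂.conj _ = _
    rw [TensorProduct.map_tmul, C₂.mem_skew_iff.1 hy, C₁.conj_one, TensorProduct.tmul_neg]
    rfl

theorem mul_left_injective_of_mem_anisotropicSkewGenerators {g : C₁.carrier ⊗[K] C₂.carrier}
    (hg : g ∈ anisotropicSkewGenerators C₁ C₂) : Function.Injective (g * ·) := by
  rcases hg with ⟨x, ⟨-, hx⟩, rfl⟩ | ⟨y, ⟨-, hy⟩, rfl⟩
  · have : (x ⊗ₜ[K] (1 : C₂.carrier) * ·) =
        (LinearMap.mulLeft K x).rTensor C₂.carrier := by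
      ext z
      induction z with
      | zero => simp
      | tmul c d => simp [Algebra.TensorProduct.tmul_mul_tmul]
      | add u v hu hv => simp only [mul_add, map_add, hu, hv]
    rw [this]
    exact Module.Flat.rTensor_preserves_injective_linearMap _ (C₁.mul_left_injective hx)
  · have : ((1 : C₁.carrier) ⊗ₜ[K] y * ·) =
        (LinearMap.mulLeft K y).lTensor C₁.carrier := by
      ext z
      induction z with
      | zero => simp
      | tmul c d => simp [Algebra.TensorProduct.tmul_mul_tmul]
      | add u v hu hv => simp only [mul_add, map_add, hu, hv]
    rw [this]
    exact Module.Flat.lTensor_preserves_injective_linearMap _ (C₂.mul_left_injective hy)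

theorem tensor_skew_le_span (h2 : (2 : K) ≠ 0) :
    (C₁.toAWI.tensor C₂.toAWI).skew ≤
      Submodule.span K (anisotropicSkewGenerators C₁ C₂) := by
  have hleft {x : C₁.carrier} (hx : x ∈ C₁.skew) :
      x ⊗ₜ[K] (1 : C₂.carrier) ∈
        Submodule.span K (anisotropicSkewGenerators C₁ C₂) := by
    have := Submodule.mem_map_of_mem (f := (TensorProduct.mk K C₁.carrier C₂.carrier).flip 1)
      (C₁.skew_le_span_norm_ne_zero h2 hx)
    rw [Submodule.map_span] at this
    exact Submodule.span_mono Set.subset_union_left this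
  have hright {y : C₂.carrier} (hy : y ∈ C₂.skew) :
      (1 : C₁.carrier) ⊗ₜ[K] y ∈
        Submodule.span K (anisotropicSkewGenerators C₁ C₂) := by
    have := Submodule.mem_map_of_mem (f := TensorProduct.mk K C₁.carrier C₂.carrier 1)
      (C₂.skew_le_span_norm_ne_zero h2 hy)
    rw [Submodule.map_span] at this
    exact Submodule.span_mono Set.subset_union_right this
  have hsub (z : C₁.carrier ⊗[K] C₂.carrier) : z - TensorProduct.map C₁.conj C₂.conj z ∈
      Submodule.span K (anisotropicSkewGenerators C₁ C₂) := by
    induction z with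
    | zero => simp
    | add u v hu hv =>
      rw [map_add, add_sub_add_comm]
      exact add_mem hu hv
    | tmul x y =>
      obtain ⟨x₀, hx₀, a, rfl⟩ := C₁.exists_mem_skew_add_smul_one h2 x
      obtain ⟨y₀, hy₀, b, rfl⟩ := C₂.exists_mem_skew_add_smul_one h2 y
      have hexpand : (x₀ + a • 1) ⊗ₜ[K] (y₀ + b • 1) -
          TensorProduct.map C₁.conj C₂.conj ((x₀ + a • 1) ⊗ₜ[K] (y₀ + b • 1)) =
            (2 * b) • (x₀ ⊗ₜ[K] (1 : C₂.carrier)) +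
              (2 * a) • ((1 : C₁.carrier) ⊗ₜ[K] y₀) := by
        rw [TensorProduct.map_tmul, map_add, map_add, map_smul, map_smul, C₁.conj_one,
          C₂.conj_one, C₁.mem_skew_iff.1 hx₀, C₂.mem_skew_iff.1 hy₀]
        simp only [TensorProduct.add_tmul, TensorProduct.tmul_add, TensorProduct.neg_tmul,
          TensorProduct.tmul_neg, ← TensorProduct.smul_tmul', TensorProduct.tmul_smul]
        module
      rw [hexpand]
      exact add_mem (Submodule.smul_mem _ _ (hleft hx₀))
        (Submodule.smul_mem _ _ (hright hy₀))
  intro (z : C₁.carrier ⊗[K] C₂.carrier) hz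
  show z ∈ Submodule.span K (anisotropicSkewGenerators C₁ C₂)
  have h := hsub z
  rw [show TensorProduct.map C₁.conj C₂.conj z = -z from hz, sub_neg_eq_add,
    ← two_smul K z] at h
  simpa [smul_smul, inv_mul_cancel₀ h2] using Submodule.smul_mem _ (2⁻¹ : K) h

theorem eq_zero_of_mul_mul_add_mul_mul_eq_zero (h2 : (2 : K) ≠ 0) {V : Type*} [AddCommGroup V]
    [Module K V] (j n : V →ₗ[K] C₁.carrier ⊗[K] C₂.carrier) (hj : Function.Injective j)
    (hrange : LinearMap.range j = (C₁.toAWI.tensor C₂.toAWI).skew)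
    (h : ∀ σ τ b, j σ * (n τ * b) + j τ * (n σ * b) = 0) : n = 0 := by
  have hgen :
      Submodule.span K (anisotropicSkewGenerators C₁ C₂) ≤ (LinearMap.ker n).map j := by
    rw [Submodule.span_le]
    intro g hg
    obtain ⟨τ, rfl⟩ : g ∈ LinearMap.range j :=
      hrange ▸ mem_skew_of_mem_anisotropicSkewGenerators C₁ C₂ hg
    refine ⟨τ, ?_, rfl⟩
    have hτ (b : C₁.carrier ⊗[K] C₂.carrier) : j τ * (n τ * b) = 0 := by
      have := h τ τ b
      rwa [← two_smul K, smul_eq_zero, or_iff_right h2] at this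
    have := mul_left_injective_of_mem_anisotropicSkewGenerators C₁ C₂ hg
      ((hτ 1).trans (mul_zero _).symm)
    rwa [mul_one] at this
  ext σ
  obtain ⟨τ, hτ, hjτ⟩ :=
    hgen (tensor_skew_le_span C₁ C₂ h2 (hrange ▸ LinearMap.mem_range_self j σ))
  rw [← hj hjτ]
  exact hτ

end CompositionAlgebra

namespace AlbertForm

variable {k : Type u} [Field k] {A : AlgebraWithInvolution k} (Φ : AlbertForm A)

theorem mul_natMap_add_mul_natMap (s t : A.skew) (a : A.carrier) :
    (s : A.carrier) * ((Φ.natMap t : A.carrier) * a) + t * ((Φ.natMap s : A.carrier) * a) =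
      -polar Φ.Q s t • a := by
  have hst := Φ.mul_natMap (s + t) a
  have hs := Φ.mul_natMap s a
  have ht := Φ.mul_natMap t a
  simp only [map_add, Submodule.coe_add, add_mul, mul_add] at hst
  rw [polar]
  linear_combination (norm := module) hst - hs - ht

theorem natMap_mul_mul_of_Q_ne_zero {s : A.skew} (hs : Φ.Q s ≠ 0) (a : A.carrier) :
    (Φ.natMap s : A.carrier) * ((s : A.carrier) * a) = -Φ.Q s • a :=
  ((Φ.nonzero_iff s).1 hs).injective <| by
    rw [Φ.mul_natMap, mul_smul_comm]

theorem natMap_mul_mul_of_exists_Q_ne_zero (h2 : (2 : k) ≠ 0) (h3 : (3 : k) ≠ 0) {t : A.skew}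
    (ht : Φ.Q t ≠ 0) (s : A.skew) (a : A.carrier) :
    (Φ.natMap s : A.carrier) * ((s : A.carrier) * a) = -Φ.Q s • a := by
  have hQ (x : k) : Φ.Q (s + x • t) = Φ.Q s + polar Φ.Q s t * x + Φ.Q t * x ^ 2 := by
    rw [QuadraticMap.map_add Φ.Q, QuadraticMap.map_smul, polar_smul_right, smul_eq_mul,
      smul_eq_mul]
    ring
  set E₀ := (Φ.natMap s : A.carrier) * ((s : A.carrier) * a) + Φ.Q s • a
  set E₁ := (Φ.natMap s : A.carrier) * ((t : A.carrier) * a) +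
    (Φ.natMap t : A.carrier) * ((s : A.carrier) * a) + polar Φ.Q s t • a
  -- the identity at `s + x • t` is quadratic in `x`; its `x ^ 2`-coefficient is the one at `t`
  have hline (x : k) (hx : Φ.Q (s + x • t) ≠ 0) : E₀ + x • E₁ = 0 := by
    have h := Φ.natMap_mul_mul_of_Q_ne_zero hx a
    have ht' := Φ.natMap_mul_mul_of_Q_ne_zero ht a
    rw [hQ x] at h
    simp only [map_add, map_smul, Submodule.coe_add, Submodule.coe_smul, add_mul, mul_add,
      smul_mul_assoc, mul_smul_comm] at h
    linear_combination (norm := module) h - (x * x) • ht'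
  obtain ⟨x₀, x₁, hne, h₀, h₁⟩ := exists_two_nonroots_of_quadratic h2 h3 ht
  rw [← hQ] at h₀ h₁
  have hE₁ : E₁ = 0 := by
    have : (x₀ - x₁) • E₁ = 0 := by
      linear_combination (norm := module) hline x₀ h₀ - hline x₁ h₁
    exact (smul_eq_zero.1 this).resolve_left (sub_ne_zero.2 hne)
  have hE₀ := hline x₀ h₀
  rw [hE₁, smul_zero, add_zero] at hE₀
  linear_combination (norm := module) hE₀

theorem natMap_eq_zero_of_Q_eq_zero (h2 : (2 : k) ≠ 0) {m₁ m₂ : ℕ}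
    (P : ProductAlgebraSplitting A m₁ m₂) (hQ : Φ.Q = 0) : Φ.natMap = 0 := by
  have hK2 : (2 : P.K) ≠ 0 := by
    rw [← map_ofNat (algebraMap k P.K) 2]
    exact (map_ne_zero _).2 h2
  let φ : P.K ⊗[k] A.carrier ≃ₗ[P.K] P.C₁.carrier ⊗[P.K] P.C₂.carrier :=
    P.iso.toLinearEquiv
  let ι := A.skew.subtype.baseChange P.K
  let ν := (A.skew.subtype ∘ₗ Φ.natMap).baseChange P.K
  have hpol (σ τ : P.K ⊗[k] A.skew) (b : P.K ⊗[k] A.carrier) :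
      ι σ * (ν τ * b) + ι τ * (ν σ * b) = 0 := by
    refine LinearMap.baseChange_mul_mul_add_mul_mul_eq_zero P.K _ _ (fun s t a => ?_) σ τ b
    simpa [hQ, polar] using Φ.mul_natMap_add_mul_natMap s t a
  have hφν : φ.toLinearMap ∘ₗ ν = 0 := by
    refine CompositionAlgebra.eq_zero_of_mul_mul_add_mul_mul_eq_zero P.C₁ P.C₂ hK2
      (φ.toLinearMap ∘ₗ ι) _ (φ.injective.comp
        (Module.Flat.lTensor_preserves_injective_linearMap _ A.skew.injective_subtype)) ?_
      fun σ τ b => ?_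
    · rw [LinearMap.range_comp, A.range_baseChange_skew_subtype P.K hK2]
      exact P.iso.map_skew
    · obtain ⟨b, rfl⟩ := φ.surjective b
      simp only [LinearMap.comp_apply, LinearEquiv.coe_coe]
      have hφ (x y : P.K ⊗[k] A.carrier) : φ (x * y) = φ x * φ y := P.iso.map_mul x y
      rw [← hφ, ← hφ, ← hφ, ← hφ, ← map_add]
      exact (map_eq_zero_iff _ φ.injective).2 (hpol σ τ b)
  ext s
  have h := LinearMap.congr_fun hφν (1 ⊗ₜ s)
  simp only [LinearMap.comp_apply, LinearEquiv.coe_coe, LinearMap.zero_apply,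
    map_eq_zero_iff _ φ.injective, ν, LinearMap.baseChange_tmul] at h
  simpa using h

theorem natMap_mul_mul (h2 : (2 : k) ≠ 0) (h3 : (3 : k) ≠ 0) {m₁ m₂ : ℕ}
    (P : ProductAlgebraSplitting A m₁ m₂) (s : A.skew) (a : A.carrier) :
    (Φ.natMap s : A.carrier) * ((s : A.carrier) * a) = -Φ.Q s • a := by
  by_cases hQ : Φ.Q = 0
  · simp [Φ.natMap_eq_zero_of_Q_eq_zero h2 P hQ, hQ]
  · obtain ⟨t, ht⟩ := DFunLike.ne_iff.1 hQ
    exact Φ.natMap_mul_mul_of_exists_Q_ne_zero h2 h3 ht s a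

def evenHom (h : ∀ (s : A.skew) (a : A.carrier),
      (Φ.natMap s : A.carrier) * ((s : A.carrier) * a) = -Φ.Q s • a) :
    CliffordAlgebra.EvenHom Φ.Q (Module.End k A.carrier) where
  bilin := -(LinearMap.mul k _).compl₁₂ (LinearMap.mul k A.carrier ∘ₗ A.skew.subtype)
    (LinearMap.mul k A.carrier ∘ₗ A.skew.subtype ∘ₗ Φ.natMap)
  contract s := by
    ext a
    simp [Φ.mul_natMap, Module.algebraMap_end_apply]
  contract_mid r s t := by
    ext a
    simp [h, mul_smul_comm]

end AlbertForm

theorem even_clifford_representation_general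
    {k : Type u} [Field k] (hk2 : (2 : k) ≠ 0) (hk3 : (3 : k) ≠ 0)
    (m₁ m₂ : ℕ)
    (A : AlgebraWithInvolution k) (hA : IsProductAlgebra A m₁ m₂)
    (Φ : AlbertForm A) :
    ∃! θ : ↥(CliffordAlgebra.even Φ.Q) →ₐ[k] Module.End k A.carrier,
      ∀ s t : A.skew,
        θ ((CliffordAlgebra.even.ι Φ.Q).bilin s t) =
          -((LinearMap.mulLeft k (s : A.carrier)) ∘ₗ
              (LinearMap.mulLeft k ((Φ.natMap t : A.skew) : A.carrier))) := by
  obtain ⟨P⟩ := hA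
  let f := Φ.evenHom (Φ.natMap_mul_mul hk2 hk3 P)
  have hf (s t : A.skew) : f.bilin s t = -((LinearMap.mulLeft k (s : A.carrier)) ∘ₗ
      (LinearMap.mulLeft k ((Φ.natMap t : A.skew) : A.carrier))) := by
    ext a
    simp [f, AlbertForm.evenHom]
  refine ⟨CliffordAlgebra.even.lift Φ.Q f, fun s t => ?_, fun θ hθ => ?_⟩
  · rw [CliffordAlgebra.even.lift_ι, hf]
  · refine CliffordAlgebra.even.algHom_ext Φ.Q (CliffordAlgebra.EvenHom.ext ?_)
    ext s t : 2
    simp [hθ, CliffordAlgebra.even.lift_ι, hf]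

/-- Let `k` be a field of characteristic not 2 or 3 and let `(A,−)` be an
`(m₁,m₂)`-product algebra with skew space `S`, Albert form `Q` and `♮`-map.  There is a unique
`k`-algebra homomorphism `θ : C⁺(S,Q) → End_k(A)` from the even Clifford algebra with
`θ(st) = −L_s ∘ L_{t♮}` for all `s, t ∈ S`. -/
theorem even_clifford_representation
    {k : Type u} [Field k] (hk2 : (2 : k) ≠ 0) (hk3 : (3 : k) ≠ 0)
    (m₁ m₂ : ℕ) (hm₁ : m₁ ∈ ({1, 2, 4, 8} : Set ℕ)) (hm₂ : m₂ ∈ ({1, 2, 4, 8} : Set ℕ))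
    (hne : (m₁, m₂) ≠ (2, 2))
    (A : AlgebraWithInvolution k) (hA : IsProductAlgebra A m₁ m₂)
    (Φ : AlbertForm A) :
    ∃! θ : ↥(CliffordAlgebra.even Φ.Q) →ₐ[k] Module.End k A.carrier,
      ∀ s t : A.skew,
        θ ((CliffordAlgebra.even.ι Φ.Q).bilin s t) =
          -((LinearMap.mulLeft k (s : A.carrier)) ∘ₗ
              (LinearMap.mulLeft k ((Φ.natMap t : A.skew) : A.carrier))) :=
  even_clifford_representation_general hk2 hk3 m₁ m₂ A hA Φ
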